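/- Let f be a continuous function on [0,1]^m with modulus of continuity ω_f. For any n ∈ ℕ and 0 < δ < 1, define φ(x) = Σ_{k∈Λ} f(k/n) Ψ_δ(x; k) with Λ = {1,3,…,2⌈n/2⌉−1}^m and Ψ_δ the partition-of-unity bumps as above. Then there exists a set A_δ ⊆ [0,1]^m with Lebesgue measure |A_δ| ≤ m·δ such that |f(x) − φ(x)| ≤ ω_f(√m / n) for all x ∈ [0,1]^m ∖ A_δ. -/

import Mathlib

open Finset MeasureTheory

/-- the ReLU activation `σ(u) = max(u,0)`. -/
def relu (u : ℝ) : ℝ := max u 0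

/-- the piecewise-linear bump `ψ_δ` built from four ReLU units. -/
noncomputable def psi (n : ℕ) (δ : ℝ) (t : ℝ) : ℝ :=
  (n / δ) * (relu (t + 1 / n) - relu (t + 1 / n - δ / n)
    - relu (t - 1 / n + δ / n) + relu (t - 1 / n))

/-- `Ψ_δ(x; k) = σ(∑_{i=1}^m ψ_δ(x_i - k_i/n) - m + 1)`. -/
noncomputable def Psi (m n : ℕ) (δ : ℝ) (x : Fin m → ℝ) (k : Fin m → ℕ) : ℝ :=
  relu ((∑ i, psi n δ (x i - (k i : ℝ) / n)) - m + 1)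

/-- the odd grid `Λ = {1, 3, …, 2⌈n/2⌉ - 1}^m` as a finite set. -/
def Lam (m n : ℕ) : Finset (Fin m → ℕ) :=
  Fintype.piFinset fun _ => (Finset.range ((n + 1) / 2)).image fun j => 2 * j + 1

/-- the network `φ(x) = ∑_{k ∈ Λ} f(k/n) Ψ_δ(x; k)`. -/
noncomputable def phi (m n : ℕ) (δ : ℝ) (f : (Fin m → ℝ) → ℝ) (x : Fin m → ℝ) : ℝ :=
  ∑ k ∈ Lam m n, f (fun i => (k i : ℝ) / n) * Psi m n δ x k

lemma relu_of_nonneg {u : ℝ} (h : 0 ≤ u) : relu u = u := max_eq_left h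
lemma relu_of_nonpos {u : ℝ} (h : u ≤ 0) : relu u = 0 := max_eq_right h

lemma relu_sub_relu (d u : ℝ) (hd : 0 < d) :
    relu u - relu (u - d) = min (max u 0) d := by
  rcases le_total u 0 with h | h
  · rw [relu_of_nonpos h, relu_of_nonpos (by linarith), max_eq_right h,
      min_eq_left hd.le]
    ring
  · rcases le_total u d with h' | h'
    · rw [relu_of_nonneg h, relu_of_nonpos (by linarith), max_eq_left h,
        min_eq_left h']
      ring
    · rw [relu_of_nonneg h, relu_of_nonneg (by linarith), max_eq_left h,
        min_eq_right h']
      ring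

lemma psi_key (n : ℕ) (δ t : ℝ) (hn : 1 ≤ n) (hδ0 : 0 < δ) :
    psi n δ t = (n / δ) *
      (min (max (t + 1/n) 0) (δ/n) - min (max (t - 1/n + δ/n) 0) (δ/n)) := by
  have hn' : (0:ℝ) < n := by exact_mod_cast Nat.pos_of_ne_zero (by omega)
  have hd : 0 < δ / n := div_pos hδ0 hn'
  have h1 := relu_sub_relu (δ/n) (t + 1/n) hd
  have h2 := relu_sub_relu (δ/n) (t - 1/n + δ/n) hd
  rw [psi]
  rw [show t - 1/n + δ/n - δ/n = t - 1/n by ring] at h2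
  rw [show relu (t + 1 / n) - relu (t + 1 / n - δ / n)
      - relu (t - 1 / n + δ / n) + relu (t - 1 / n)
      = (relu (t + 1/n) - relu (t + 1/n - δ/n))
        - (relu (t - 1/n + δ/n) - relu (t - 1/n)) by ring, h1, h2]

lemma psi_nonneg (n : ℕ) (δ t : ℝ) (hn : 1 ≤ n) (hδ0 : 0 < δ) (hδ1 : δ < 1) :
    0 ≤ psi n δ t := by
  have hn' : (0:ℝ) < n := by exact_mod_cast Nat.pos_of_ne_zero (by omega)
  rw [psi_key n δ t hn hδ0]
  have hmono : min (max (t - 1/n + δ/n) 0) (δ/n) ≤ min (max (t + 1/n) 0) (δ/n) := by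
    apply min_le_min _ le_rfl
    apply max_le_max _ le_rfl
    have h2n : δ/n ≤ 2/n := by gcongr; linarith
    have : (2:ℝ)/n = 1/n + 1/n := by ring
    linarith
  have := sub_nonneg.mpr hmono
  positivity

lemma psi_le_one (n : ℕ) (δ t : ℝ) (hn : 1 ≤ n) (hδ0 : 0 < δ) (hδ1 : δ < 1) :
    psi n δ t ≤ 1 := by
  have hn' : (0:ℝ) < n := by exact_mod_cast Nat.pos_of_ne_zero (by omega)
  have hd : 0 < δ / n := div_pos hδ0 hn'
  rw [psi_key n δ t hn hδ0]
  have h1 : min (max (t + 1/n) 0) (δ/n) ≤ δ/n := min_le_right _ _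
  have h2 : 0 ≤ min (max (t - 1/n + δ/n) 0) (δ/n) :=
    le_min (le_max_right _ _) hd.le
  calc (n/δ) * (min (max (t + 1/n) 0) (δ/n) - min (max (t - 1/n + δ/n) 0) (δ/n))
      ≤ (n/δ) * (δ/n) := by
        apply mul_le_mul_of_nonneg_left (by linarith) (by positivity)
    _ = 1 := by field_simp

lemma psi_eq_one (n : ℕ) (δ t : ℝ) (hn : 1 ≤ n) (hδ0 : 0 < δ) (hδ1 : δ < 1)
    (ht : |t| ≤ (1 - δ)/n) : psi n δ t = 1 := by
  have hn' : (0:ℝ) < n := by exact_mod_cast Nat.pos_of_ne_zero (by omega)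
  obtain ⟨ht1, ht2⟩ := abs_le.mp ht
  have hδn : 0 < δ/n := div_pos hδ0 hn'
  have e1 : (1 - δ)/n = 1/n - δ/n := by ring
  rw [e1] at ht1 ht2
  rw [psi, relu_of_nonneg (show (0:ℝ) ≤ t + 1/n by linarith),
    relu_of_nonneg (show (0:ℝ) ≤ t + 1/n - δ/n by linarith),
    relu_of_nonpos (show t - 1/n + δ/n ≤ 0 by linarith),
    relu_of_nonpos (show t - 1/n ≤ 0 by linarith)]
  field_simp
  ring

lemma psi_eq_zero (n : ℕ) (δ t : ℝ) (hn : 1 ≤ n) (hδ0 : 0 < δ) (hδ1 : δ < 1)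
    (ht : 1/n ≤ |t|) : psi n δ t = 0 := by
  have hn' : (0:ℝ) < n := by exact_mod_cast Nat.pos_of_ne_zero (by omega)
  have hδn : 0 < δ/n := div_pos hδ0 hn'
  have hδn' : δ/n < 1/n := by gcongr
  rcases le_abs.mp ht with h | h
  · rw [psi, relu_of_nonneg (show (0:ℝ) ≤ t + 1/n by linarith),
      relu_of_nonneg (show (0:ℝ) ≤ t + 1/n - δ/n by linarith),
      relu_of_nonneg (show (0:ℝ) ≤ t - 1/n + δ/n by linarith),
      relu_of_nonneg (show (0:ℝ) ≤ t - 1/n by linarith)]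
    ring
  · rw [psi, relu_of_nonpos (show t + 1/n ≤ 0 by linarith),
      relu_of_nonpos (show t + 1/n - δ/n ≤ 0 by linarith),
      relu_of_nonpos (show t - 1/n + δ/n ≤ 0 by linarith),
      relu_of_nonpos (show t - 1/n ≤ 0 by linarith)]
    ring


lemma Psi_eq_one (m n : ℕ) (δ : ℝ) (x : Fin m → ℝ) (k : Fin m → ℕ)
    (hn : 1 ≤ n) (hδ0 : 0 < δ) (hδ1 : δ < 1)
    (hk : ∀ i, |x i - (k i : ℝ)/n| ≤ (1 - δ)/n) : Psi m n δ x k = 1 := by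
  rw [Psi]
  have hsum : ∀ i ∈ Finset.univ, psi n δ (x i - (k i : ℝ)/n) = 1 := fun i _ =>
    psi_eq_one n δ _ hn hδ0 hδ1 (hk i)
  rw [Finset.sum_congr rfl hsum, Finset.sum_const, Finset.card_univ,
    Fintype.card_fin, nsmul_eq_mul, mul_one]
  rw [relu_of_nonneg (by linarith)]
  ring

lemma Psi_eq_zero (m n : ℕ) (δ : ℝ) (x : Fin m → ℝ) (k : Fin m → ℕ)
    (hn : 1 ≤ n) (hδ0 : 0 < δ) (hδ1 : δ < 1) (i0 : Fin m)
    (h0 : 1/(n:ℝ) ≤ |x i0 - (k i0 : ℝ)/n|) : Psi m n δ x k = 0 := by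
  rw [Psi]
  have hle : ∀ i ∈ Finset.univ, psi n δ (x i - (k i : ℝ)/n)
      ≤ (if i = i0 then 0 else 1) := by
    intro i _
    by_cases hi : i = i0
    · subst hi
      simp [psi_eq_zero n δ _ hn hδ0 hδ1 h0]
    · simp only [hi, if_false]
      exact psi_le_one n δ _ hn hδ0 hδ1
  have hsum := Finset.sum_le_sum hle
  have hite : (∑ i : Fin m, (if i = i0 then (0:ℝ) else 1)) = m - 1 := by
    have : ∀ i ∈ Finset.univ, (if i = i0 then (0:ℝ) else 1)
        = 1 - (if i = i0 then 1 else 0) := by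
      intro i _; split <;> ring
    rw [Finset.sum_congr rfl this, Finset.sum_sub_distrib, Finset.sum_const,
      Finset.card_univ, Fintype.card_fin, Finset.sum_ite_eq' Finset.univ i0 (fun _ => (1:ℝ))]
    simp
  rw [hite] at hsum
  rw [relu_of_nonpos (by linarith)]

lemma mem_Lam_odd {m n : ℕ} {k : Fin m → ℕ} (hk : k ∈ Lam m n) (i : Fin m) :
    ∃ j, j < (n+1)/2 ∧ k i = 2 * j + 1 := by
  have := Fintype.mem_piFinset.mp hk i
  obtain ⟨j, hj, hji⟩ := Finset.mem_image.mp this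
  exact ⟨j, Finset.mem_range.mp hj, hji.symm⟩

lemma phi_eq (m n : ℕ) (δ : ℝ) (f : (Fin m → ℝ) → ℝ) (x : Fin m → ℝ) (k : Fin m → ℕ)
    (hn : 1 ≤ n) (hδ0 : 0 < δ) (hδ1 : δ < 1) (hkmem : k ∈ Lam m n)
    (hk : ∀ i, |x i - (k i : ℝ)/n| ≤ (1 - δ)/n) :
    phi m n δ f x = f (fun i => (k i : ℝ)/n) := by
  have hn' : (0:ℝ) < n := by exact_mod_cast Nat.pos_of_ne_zero (by omega)
  rw [phi, Finset.sum_eq_single_of_mem k hkmem]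
  · rw [Psi_eq_one m n δ x k hn hδ0 hδ1 hk, mul_one]
  · intro b hb hbk
    obtain ⟨i0, hi0⟩ := Function.ne_iff.mp hbk
    obtain ⟨a, ha, hba⟩ := mem_Lam_odd hb i0
    obtain ⟨c, hc, hkc⟩ := mem_Lam_odd hkmem i0
    have hab : a ≠ c := by
      intro h; apply hi0; rw [hba, hkc, h]
    have habs : (2:ℝ) ≤ |((b i0 : ℝ)) - (k i0 : ℝ)| := by
      rw [hba, hkc]
      rcases lt_or_gt_of_ne hab with h | h
      · have : (a:ℝ) + 1 ≤ c := by exact_mod_cast h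
        rw [abs_of_nonpos (by push_cast; linarith)]
        push_cast
        linarith
      · have : (c:ℝ) + 1 ≤ a := by exact_mod_cast h
        rw [abs_of_nonneg (by push_cast; linarith)]
        push_cast
        linarith
    have hdist : 1/(n:ℝ) ≤ |x i0 - (b i0 : ℝ)/n| := by
      have htri : |(b i0 : ℝ)/n - (k i0 : ℝ)/n|
          ≤ |x i0 - (b i0 : ℝ)/n| + |x i0 - (k i0 : ℝ)/n| := by
        have := abs_sub_le ((b i0 : ℝ)/n) (x i0) ((k i0 : ℝ)/n)
        rw [abs_sub_comm ((b i0:ℝ)/n) (x i0)] at this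
        linarith [this]
      have heq : |(b i0 : ℝ)/n - (k i0 : ℝ)/n| = |(b i0 : ℝ) - (k i0 : ℝ)|/n := by
        rw [div_sub_div_same, abs_div, abs_of_pos hn']
      have h2n : 2/(n:ℝ) ≤ |(b i0 : ℝ)/n - (k i0 : ℝ)/n| := by
        rw [heq]; gcongr
      have hxk := hk i0
      have : (2:ℝ)/n - (1 - δ)/n ≤ |x i0 - (b i0 : ℝ)/n| := by linarith
      have : (1:ℝ)/n ≤ (2:ℝ)/n - (1-δ)/n := by
        rw [div_sub_div_same, div_le_div_iff₀ hn' hn']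
        ring_nf
        nlinarith
      linarith
    rw [Psi_eq_zero m n δ x b hn hδ0 hδ1 i0 hdist, mul_zero]

lemma good_coord (n : ℕ) (hn : 1 ≤ n) (δ : ℝ) (hδ0 : 0 < δ) (hδ1 : δ < 1)
    (t : ℝ) (ht0 : 0 ≤ t) (ht1 : t ≤ 1)
    (hbad : ∀ j : ℕ, j ≤ (n+1)/2 → n*t ≤ 2*j - δ ∨ 2*j + δ ≤ n*t) :
    ∃ c : ℕ, c < (n+1)/2 ∧ |t - (2*(c:ℝ)+1)/n| ≤ (1-δ)/n := by
  have hn' : (0:ℝ) < n := by exact_mod_cast Nat.pos_of_ne_zero (by omega)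
  set q := (n+1)/2 with hq
  have h2q : n ≤ 2*q := by omega
  have h2q' : (n:ℝ) ≤ 2*q := by exact_mod_cast h2q
  set u := (n:ℝ)*t with hu
  have hu0 : 0 ≤ u := by positivity
  have hun : u ≤ n := by
    calc u ≤ (n:ℝ)*1 := by apply mul_le_mul_of_nonneg_left ht1 hn'.le
    _ = n := mul_one _
  set c := ⌊u/2⌋₊ with hc
  have hcl : 2*(c:ℝ) ≤ u := by
    have := Nat.floor_le (show 0 ≤ u/2 by positivity)
    rw [← hc] at this
    linarith
  have hcu : u < 2*(c:ℝ) + 2 := by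
    have := Nat.lt_floor_add_one (u/2)
    rw [← hc] at this
    linarith
  have hcq : c < q := by
    by_contra hcq
    push_neg at hcq
    have : (q:ℝ) ≤ c := by exact_mod_cast hcq
    have h1 : 2*(q:ℝ) ≤ u := by linarith
    have h2 : u ≤ 2*(q:ℝ) := by linarith
    rcases hbad q le_rfl with h | h <;> linarith
  refine ⟨c, hcq, ?_⟩
  have hb1 : 2*(c:ℝ) + δ ≤ u := by
    rcases hbad c (by omega) with h | h <;> linarith
  have hb2 : u ≤ 2*(c:ℝ) + 2 - δ := by
    rcases hbad (c+1) (by omega) with h | h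
    · push_cast at h; linarith
    · push_cast at h; linarith
  have heq : t - (2*(c:ℝ)+1)/n = (u - (2*(c:ℝ)+1))/n := by
    rw [hu]; field_simp
  rw [heq, abs_div, abs_of_pos hn']
  gcongr
  rw [abs_le]
  constructor <;> linarith

lemma bad_measure (n : ℕ) (hn : 1 ≤ n) (δ : ℝ) (hδ0 : 0 < δ) (hδ1 : δ < 1) :
    volume (Set.Icc (0:ℝ) 1 ∩
      ⋃ j ∈ Finset.range ((n+1)/2 + 1), Set.Ioo ((2*(j:ℝ) - δ)/n) ((2*(j:ℝ) + δ)/n))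
    ≤ ENNReal.ofReal δ := by
  have hn' : (0:ℝ) < n := by exact_mod_cast Nat.pos_of_ne_zero (by omega)
  set q := (n+1)/2 with hq
  set F : ℕ → ℝ := fun j => (δ/n) * max (min (2*(j:ℝ)) (n+1) - 1) 0 with hF
  have hFmono : ∀ j : ℕ, F j ≤ F (j+1) := by
    intro j
    have hmin : min (2*(j:ℝ)) (n+1) ≤ min (2*((j:ℝ)+1)) (n+1) :=
      min_le_min (by linarith) le_rfl
    have : ((j+1:ℕ):ℝ) = (j:ℝ)+1 := by push_cast; ring
    rw [hF]
    simp only [this]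
    exact mul_le_mul_of_nonneg_left (max_le_max (by linarith) le_rfl) (by positivity)
  have hsub : Set.Icc (0:ℝ) 1 ∩
      (⋃ j ∈ Finset.range (q + 1), Set.Ioo ((2*(j:ℝ) - δ)/n) ((2*(j:ℝ) + δ)/n))
      ⊆ ⋃ j ∈ Finset.range (q + 1),
        Set.Icc (max ((2*(j:ℝ) - δ)/n) 0) (min ((2*(j:ℝ) + δ)/n) 1) := by
    rintro t ⟨htI, htU⟩
    simp only [Set.mem_iUnion, Set.mem_Ioo, Set.mem_Icc, exists_prop] at htU ⊢
    obtain ⟨j, hj, h1, h2⟩ := htU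
    exact ⟨j, hj, max_le h1.le htI.1, le_min h2.le htI.2⟩
  have hnR : (1:ℝ) ≤ (n:ℝ) := by exact_mod_cast hn
  have hF0 : F 0 = 0 := by
    simp only [hF, Nat.cast_zero, mul_zero]
    rw [min_eq_left (show (0:ℝ) ≤ (n:ℝ)+1 by linarith),
      max_eq_right (show (0:ℝ)-1 ≤ 0 by norm_num)]
    ring
  have claim1 : ∀ j : ℕ, j ≤ q →
      min ((2*(j:ℝ) + δ)/n) 1 - max ((2*(j:ℝ) - δ)/n) 0 ≤ F (j+1) - F j := by
    intro j hj
    rcases Nat.eq_zero_or_pos j with rfl | hj1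
    · have hF1 : F 1 = δ/n := by
        simp only [hF, Nat.cast_one, mul_one]
        rw [min_eq_left (show (2:ℝ) ≤ (n:ℝ)+1 by linarith),
          max_eq_left (show (0:ℝ) ≤ 2-1 by norm_num)]
        ring
      rw [hF0, hF1]
      simp only [Nat.cast_zero, mul_zero, zero_add, zero_sub]
      rw [max_eq_right (show -δ/(n:ℝ) ≤ 0 by
        apply div_nonpos_of_nonpos_of_nonneg <;> linarith)]
      have := min_le_left (δ/(n:ℝ)) 1
      linarith
    · have hjR : (1:ℝ) ≤ (j:ℝ) := by exact_mod_cast hj1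
      have hcast : ((j+1:ℕ):ℝ) = (j:ℝ)+1 := by push_cast; ring
      have hFj : F j = (δ/n) * (min (2*(j:ℝ)) ((n:ℝ)+1) - 1) := by
        simp only [hF]
        rw [max_eq_left (show (0:ℝ) ≤ min (2*(j:ℝ)) ((n:ℝ)+1) - 1 by
          have := le_min (show (2:ℝ) ≤ 2*(j:ℝ) by linarith)
            (show (2:ℝ) ≤ (n:ℝ)+1 by linarith)
          linarith)]
      have hFj1 : F (j+1) = (δ/n) * (min (2*(j:ℝ)+2) ((n:ℝ)+1) - 1) := by
        simp only [hF, hcast]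
        rw [show 2*((j:ℝ)+1) = 2*(j:ℝ)+2 by ring]
        rw [max_eq_left (show (0:ℝ) ≤ min (2*(j:ℝ)+2) ((n:ℝ)+1) - 1 by
          have := le_min (show (2:ℝ) ≤ 2*(j:ℝ)+2 by linarith)
            (show (2:ℝ) ≤ (n:ℝ)+1 by linarith)
          linarith)]
      rcases lt_trichotomy (2*j) n with h | h | h
      · have hR : 2*(j:ℝ) + 1 ≤ n := by exact_mod_cast h
        have e1 : min (2*(j:ℝ)) ((n:ℝ)+1) = 2*(j:ℝ) := min_eq_left (by linarith)
        have e2 : min (2*(j:ℝ)+2) ((n:ℝ)+1) = 2*(j:ℝ)+2 := min_eq_left (by linarith)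
        rw [hFj, hFj1, e1, e2]
        have h1 := min_le_left ((2*(j:ℝ) + δ)/n) 1
        have h2 := le_max_left ((2*(j:ℝ) - δ)/n) 0
        have h3 : (2*(j:ℝ) + δ)/n - (2*(j:ℝ) - δ)/n = (δ/n)*2 := by
          field_simp; ring
        linarith
      · have hR : 2*(j:ℝ) = n := by exact_mod_cast h
        have e1 : min (2*(j:ℝ)) ((n:ℝ)+1) = 2*(j:ℝ) := min_eq_left (by linarith)
        have e2 : min (2*(j:ℝ)+2) ((n:ℝ)+1) = (n:ℝ)+1 := min_eq_right (by linarith)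
        rw [hFj, hFj1, e1, e2, hR]
        have h1 := min_le_right (((n:ℝ) + δ)/n) 1
        have h2 := le_max_left (((n:ℝ) - δ)/n) 0
        have h3 : 1 - ((n:ℝ) - δ)/n = δ/n := by
          field_simp
          ring
        have h4 : (δ/(n:ℝ)) * ((n:ℝ)+1-1) - (δ/n) * ((n:ℝ)-1) = δ/n := by ring
        linarith
      · have hR : (n:ℝ) + 1 ≤ 2*(j:ℝ) := by exact_mod_cast h
        have h1 : min ((2*(j:ℝ) + δ)/n) 1 ≤ 1 := min_le_right _ _
        have h2 : (1:ℝ) ≤ (2*(j:ℝ) - δ)/n := by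
          rw [le_div_iff₀ hn']
          linarith
        have h3 := le_max_left ((2*(j:ℝ) - δ)/n) 0
        have h4 := sub_nonneg.mpr (hFmono j)
        linarith
  calc volume (Set.Icc (0:ℝ) 1 ∩
      (⋃ j ∈ Finset.range (q + 1), Set.Ioo ((2*(j:ℝ) - δ)/n) ((2*(j:ℝ) + δ)/n)))
      ≤ volume (⋃ j ∈ Finset.range (q + 1),
        Set.Icc (max ((2*(j:ℝ) - δ)/n) 0) (min ((2*(j:ℝ) + δ)/n) 1)) :=
        measure_mono hsub
    _ ≤ ∑ j ∈ Finset.range (q+1),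
        volume (Set.Icc (max ((2*(j:ℝ) - δ)/n) 0) (min ((2*(j:ℝ) + δ)/n) 1)) :=
        measure_biUnion_finset_le _ _
    _ ≤ ∑ j ∈ Finset.range (q+1), ENNReal.ofReal (F (j+1) - F j) := by
        apply Finset.sum_le_sum
        intro j hj
        rw [Real.volume_Icc]
        exact ENNReal.ofReal_le_ofReal (claim1 j (by
          have := Finset.mem_range.mp hj; omega))
    _ = ENNReal.ofReal (∑ j ∈ Finset.range (q+1), (F (j+1) - F j)) :=
        (ENNReal.ofReal_sum_of_nonneg (fun j _ => sub_nonneg.mpr (hFmono j))).symm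
    _ = ENNReal.ofReal (F (q+1) - F 0) := by rw [Finset.sum_range_sub]
    _ ≤ ENNReal.ofReal δ := by
        apply ENNReal.ofReal_le_ofReal
        have hFq : F (q+1) = δ := by
          simp only [hF]
          have h2q : (n:ℝ) + 1 ≤ 2*((q+1:ℕ):ℝ) := by
            have : n + 1 ≤ 2*(q+1) := by omega
            exact_mod_cast this
          rw [min_eq_right h2q, max_eq_left (show (0:ℝ) ≤ (n:ℝ)+1-1 by linarith)]
          field_simp
          ring
        rw [hF0, hFq]
        linarith

/-- for continuous `f` on `[0,1]^m` with modulus of continuity `ω_f`, there is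
a set `A_δ ⊆ [0,1]^m` of Lebesgue measure at most `m δ` with
`|f(x) - φ(x)| ≤ ω_f(√m / n)` for all `x ∈ [0,1]^m ∖ A_δ`. -/
theorem stmt12 (m n : ℕ) (hm : 1 ≤ m) (hn : 1 ≤ n) (δ : ℝ) (hδ0 : 0 < δ) (hδ1 : δ < 1)
    (f : (Fin m → ℝ) → ℝ) (hf : ContinuousOn f (Set.Icc 0 1))
    (ω : ℝ → ℝ)
    (hω : ∀ x ∈ Set.Icc (0 : Fin m → ℝ) 1, ∀ y ∈ Set.Icc (0 : Fin m → ℝ) 1, ∀ r : ℝ,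
      Real.sqrt (∑ i, (x i - y i) ^ 2) ≤ r → |f x - f y| ≤ ω r) :
    ∃ A ⊆ Set.Icc (0 : Fin m → ℝ) 1,
      volume A ≤ ENNReal.ofReal (m * δ) ∧
      ∀ x ∈ Set.Icc (0 : Fin m → ℝ) 1 \ A,
        |f x - phi m n δ f x| ≤ ω (Real.sqrt m / n) := by
  have hn' : (0:ℝ) < n := by exact_mod_cast Nat.pos_of_ne_zero (by omega)
  set q := (n+1)/2 with hq
  set Bad : Set ℝ :=
    ⋃ j ∈ Finset.range (q + 1), Set.Ioo ((2*(j:ℝ) - δ)/n) ((2*(j:ℝ) + δ)/n) with hBad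
  set A : Set (Fin m → ℝ) :=
    Set.Icc 0 1 ∩ ⋃ i : Fin m, (fun x : Fin m → ℝ => x i) ⁻¹' Bad with hA
  refine ⟨A, Set.inter_subset_left, ?_, ?_⟩
  · -- measure bound
    have hAeq : A = ⋃ i : Fin m,
        (Set.Icc 0 1 ∩ (fun x : Fin m → ℝ => x i) ⁻¹' Bad) := by
      rw [hA, Set.inter_iUnion]
    rw [hAeq]
    calc volume (⋃ i : Fin m, (Set.Icc 0 1 ∩ (fun x : Fin m → ℝ => x i) ⁻¹' Bad))
        ≤ ∑ i : Fin m, volume (Set.Icc 0 1 ∩ (fun x : Fin m → ℝ => x i) ⁻¹' Bad) :=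
          measure_iUnion_fintype_le _ _
      _ ≤ ∑ _i : Fin m, ENNReal.ofReal δ := by
          apply Finset.sum_le_sum
          intro i _
          have hSi : Set.Icc (0 : Fin m → ℝ) 1 ∩ (fun x : Fin m → ℝ => x i) ⁻¹' Bad
              = Set.pi Set.univ
                (fun j => if j = i then Set.Icc (0:ℝ) 1 ∩ Bad else Set.Icc (0:ℝ) 1) := by
            ext x
            simp only [Set.mem_inter_iff, Set.mem_preimage, Set.mem_pi, Set.mem_univ,
              forall_true_left, Set.mem_Icc, Pi.le_def]
            constructor
            · rintro ⟨⟨h0, h1⟩, hb⟩ j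
              by_cases hj : j = i
              · subst hj
                simp only [if_pos rfl]
                exact ⟨Set.mem_Icc.mpr ⟨h0 j, h1 j⟩, hb⟩
              · simp only [if_neg hj]
                exact Set.mem_Icc.mpr ⟨h0 j, h1 j⟩
            · intro h
              have hi := h i
              rw [if_pos rfl] at hi
              refine ⟨⟨fun j => ?_, fun j => ?_⟩, hi.2⟩
              · by_cases hj : j = i
                · subst hj; exact hi.1.1
                · have := h j; rw [if_neg hj] at this; exact this.1
              · by_cases hj : j = i
                · subst hj; exact hi.1.2
                · have := h j; rw [if_neg hj] at this; exact this.2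
          rw [hSi, volume_pi_pi]
          rw [Finset.prod_eq_single_of_mem i (Finset.mem_univ i) (by
            intro j _ hj
            rw [if_neg hj, Real.volume_Icc]
            norm_num)]
          rw [if_pos rfl]
          exact bad_measure n hn δ hδ0 hδ1
      _ = ENNReal.ofReal (m * δ) := by
          rw [Finset.sum_const, Finset.card_univ, Fintype.card_fin, nsmul_eq_mul,
            ENNReal.ofReal_mul (by positivity), ENNReal.ofReal_natCast]
  · -- pointwise bound
    rintro x ⟨hx, hxA⟩
    have hxB : ∀ i, x i ∉ Bad := by
      intro i hi
      exact hxA ⟨hx, Set.mem_iUnion.mpr ⟨i, hi⟩⟩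
    obtain ⟨hx0, hx1⟩ := Set.mem_Icc.mp hx
    have hgood : ∀ i, ∃ c : ℕ, c < q ∧ |x i - (2*(c:ℝ)+1)/n| ≤ (1-δ)/n := by
      intro i
      apply good_coord n hn δ hδ0 hδ1 (x i) (hx0 i) (hx1 i)
      intro j hj
      have hnotin := hxB i
      rw [hBad] at hnotin
      have : x i ∉ Set.Ioo ((2*(j:ℝ) - δ)/n) ((2*(j:ℝ) + δ)/n) := by
        intro hmem
        exact hnotin (Set.mem_iUnion₂.mpr ⟨j, Finset.mem_range.mpr (by omega), hmem⟩)
      rw [Set.mem_Ioo, not_and_or, not_lt, not_lt] at this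
      rcases this with h | h
      · left
        have h2 := (le_div_iff₀ hn').mp h
        nlinarith [h2]
      · right
        have h2 := (div_le_iff₀ hn').mp h
        nlinarith [h2]
    choose c hc1 hc2 using hgood
    set k : Fin m → ℕ := fun i => 2 * c i + 1 with hkdef
    have hk : ∀ i, |x i - (k i : ℝ)/n| ≤ (1-δ)/n := by
      intro i
      have := hc2 i
      have hcast : ((k i : ℕ):ℝ) = 2*(c i:ℝ)+1 := by rw [hkdef]; push_cast; ring
      rw [hcast]
      exact this
    have hkmem : k ∈ Lam m n := by
      apply Fintype.mem_piFinset.mpr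
      intro i
      exact Finset.mem_image.mpr ⟨c i, Finset.mem_range.mpr (hc1 i), rfl⟩
    rw [phi_eq m n δ f x k hn hδ0 hδ1 hkmem hk]
    have hkn : ∀ i, (k i : ℝ) ≤ n := by
      intro i
      have : k i ≤ n := by
        have := hc1 i
        rw [hkdef]
        simp only
        omega
      exact_mod_cast this
    apply hω x hx _ ?_ _ ?_
    · apply Set.mem_Icc.mpr
      constructor
      · intro i; positivity
      · intro i
        exact (div_le_one hn').mpr (hkn i)
    · have hterm : ∀ i ∈ Finset.univ, (x i - (k i:ℝ)/n)^2 ≤ (1/(n:ℝ))^2 := by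
        intro i _
        have h1 : (1-δ)/(n:ℝ) ≤ 1/n := by gcongr <;> linarith
        have h2 := (hk i).trans h1
        obtain ⟨ha, hb⟩ := abs_le.mp h2
        apply sq_le_sq' <;> linarith
      have hsum : ∑ i, (x i - (k i:ℝ)/n)^2 ≤ (m:ℝ) * (1/n)^2 := by
        calc ∑ i, (x i - (k i:ℝ)/n)^2 ≤ ∑ _i : Fin m, (1/(n:ℝ))^2 :=
            Finset.sum_le_sum hterm
        _ = (m:ℝ) * (1/n)^2 := by
            rw [Finset.sum_const, Finset.card_univ, Fintype.card_fin, nsmul_eq_mul]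
      calc Real.sqrt (∑ i, (x i - (k i:ℝ)/n)^2) ≤ Real.sqrt ((m:ℝ) * (1/n)^2) :=
          Real.sqrt_le_sqrt hsum
      _ = Real.sqrt m / n := by
          rw [Real.sqrt_mul (by positivity), Real.sqrt_sq (by positivity)]
          field_simp
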